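/- arXiv:1311.0722 — 2 statements merged into one kernel-verified Lean document; each statement's English description precedes it below -/
import Mathlib

section
/- Let X, Y be Banach spaces and f = Σ_{p≥0} f^(p) a formal series with multiradius of convergence ρ_⊗(f) > 0. For r with 0 < r < ρ_⊗(f), for all φ, ψ ∈ X and h ∈ ℝ with ‖φ‖_X ≤ r and ‖φ + hψ‖_X ≤ r, the first-order Taylor remainder satisfies ‖f(φ + hψ) − f(φ) − h·δf_φ(ψ)‖_Y ≤ (1/2)·[[f]]''(r)·h²·‖ψ‖²_X, where δf_φ(ψ) := Σ_p p·f^(p)_⊗(ψ ⊗ φ^{⊗(p−1)}) and [[f]]''(r) = Σ_p p(p−1)‖f^(p)‖_⊗ r^{p−2}. -/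
open scoped ENNReal

/-!
On the segment from `φ` to `φ + hψ`, which stays in the closed ball of radius `r` by convexity,
the derivative of `t ↦ f^(p)(φ + thψ, …, φ + thψ)` is the sum of the `p` partial derivatives
`f^(p)(…, hψ, …)`. As a function of the base point, each is a `(p-1)`-linear map of norm
`≤ ‖f^(p)‖ ‖hψ‖`, so the derivative is Lipschitz in `t` with constant
`p(p-1)‖f^(p)‖ r^(p-2) ‖hψ‖²`, and the mean value inequality bounds the first order Taylor
remainder of the `p`-th term by half of it. These bounds are summable for `r` below the radius of
convergence, and symmetry of `f^(p)` collapses the `p` partial derivatives into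
`p f^(p)(ψ, φ, …, φ)`.
-/

open Function Set

theorem Function.update_const_eq_cons_comp_swap {α : Type*} {n : ℕ} (i : Fin (n + 1)) (x b : α) :
    update (fun _ => x) i b = (Fin.cons b (fun _ => x) : Fin (n + 1) → α) ∘ Equiv.swap i 0 := by
  funext j
  rcases eq_or_ne j i with rfl | hji
  · simp
  rcases eq_or_ne j 0 with rfl | hj0
  · obtain ⟨k, rfl⟩ := Fin.exists_succ_eq.2 hji.symm
    simp [hji]
  · obtain ⟨k, rfl⟩ := Fin.exists_succ_eq.2 hj0
    simp [hji, Equiv.swap_apply_of_ne_of_ne hji hj0]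

theorem norm_sub_sub_deriv_le_of_norm_deriv_sub_le {F : Type*} [NormedAddCommGroup F]
    [NormedSpace ℝ F] {g g' : ℝ → F} {C : ℝ} (hg : ∀ t ∈ Icc (0 : ℝ) 1, HasDerivAt g (g' t) t)
    (hC : ∀ t ∈ Ico (0 : ℝ) 1, ‖g' t - g' 0‖ ≤ C * t) :
    ‖g 1 - g 0 - g' 0‖ ≤ C / 2 := by
  have hG : ∀ t ∈ Icc (0 : ℝ) 1,
      HasDerivAt (fun s => g s - g 0 - s • g' 0) (g' t - g' 0) t := fun t ht =>
    ((hg t ht).sub_const _).sub (by simpa using (hasDerivAt_id t).smul_const (g' 0))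
  have hB : ∀ t : ℝ, HasDerivAt (fun s => C / 2 * s ^ 2) (C * t) t := fun t =>
    ((hasDerivAt_pow 2 t).const_mul (C / 2)).congr_deriv (by norm_num; ring)
  simpa using image_norm_le_of_norm_deriv_right_le_deriv_boundary
    (fun t ht => (hG t ht).continuousAt.continuousWithinAt)
    (fun t ht => (hG t (Ico_subset_Icc_self ht)).hasDerivWithinAt) (by simp) hB hC
    (right_mem_Icc.2 zero_le_one)

namespace ContinuousMultilinearMap

variable {𝕜 E F : Type*} [NontriviallyNormedField 𝕜] [NormedAddCommGroup E] [NormedSpace 𝕜 E]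
  [NormedAddCommGroup F] [NormedSpace 𝕜 F] {n : ℕ}

theorem norm_map_update_const_sub_le (m : ContinuousMultilinearMap 𝕜 (fun _ : Fin (n + 1) => E) F)
    (i : Fin (n + 1)) (b x y : E) :
    ‖m (update (fun _ => x) i b) - m (update (fun _ => y) i b)‖ ≤
      ‖m‖ * ‖b‖ * n * max ‖x‖ ‖y‖ ^ (n - 1) * ‖x - y‖ := by
  set m' := (m.domDomCongr (Equiv.swap i 0)).curryLeft b
  have hm' : ∀ z, m (update (fun _ => z) i b) = m' fun _ => z := fun z => by
    simp [m', update_const_eq_cons_comp_swap, comp_def]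
  have hm'_norm : ‖m'‖ ≤ ‖m‖ * ‖b‖ := by
    simpa using (m.domDomCongr (Equiv.swap i 0)).curryLeft.le_opNorm b
  rw [hm', hm']
  calc _ ≤ ‖m'‖ * Fintype.card (Fin n) *
        max ‖fun _ : Fin n => x‖ ‖fun _ : Fin n => y‖ ^ (Fintype.card (Fin n) - 1) *
          ‖(fun _ : Fin n => x) - fun _ => y‖ := m'.norm_image_sub_le _ _
    _ ≤ _ := by
      rw [Fintype.card_fin]
      gcongr
      · exact pi_norm_const_le x
      · exact pi_norm_const_le y
      · exact pi_norm_const_le (x - y)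

theorem sum_map_update_const_smul_of_symm
    (m : ContinuousMultilinearMap 𝕜 (fun _ : Fin n => E) F)
    (hm : ∀ (σ : Equiv.Perm (Fin n)) (v : Fin n → E), m (fun i => v (σ i)) = m v)
    (c : 𝕜) (x y : E) :
    ∑ i, m (update (fun _ => x) i (c • y)) =
      c • (n : 𝕜) • m (fun i => if (i : ℕ) = 0 then y else x) := by
  cases n with
  | zero => simp
  | succ q =>
    have hcons : (fun i : Fin (q + 1) => if (i : ℕ) = 0 then y else x) =
        Fin.cons y fun _ => x := by
      funext i
      cases i using Fin.cases <;> simp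
    have hterm : ∀ i, m (update (fun _ => x) i (c • y)) = c • m (Fin.cons y fun _ => x) :=
      fun i => by
        rw [update_const_eq_cons_comp_swap, ← m.cons_smul]
        exact hm _ _
    simp only [hterm, hcons, Finset.sum_const, Finset.card_univ, Fintype.card_fin]
    rw [← Nat.cast_smul_eq_nsmul 𝕜, smul_comm]

end ContinuousMultilinearMap

namespace ContinuousMultilinearMap

variable {E F : Type*} [NormedAddCommGroup E] [NormedSpace ℝ E] [NormedAddCommGroup F]
  [NormedSpace ℝ F] {n : ℕ}

theorem hasDerivAt_map_const_add_smul (m : ContinuousMultilinearMap ℝ (fun _ : Fin n => E) F)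
    (a b : E) (t : ℝ) :
    HasDerivAt (fun s : ℝ => m fun _ => a + s • b)
      (∑ i, m (update (fun _ => a + t • b) i b)) t := by
  have hline : HasDerivAt (fun s : ℝ => fun _ : Fin n => a + s • b) (fun _ => b) t :=
    hasDerivAt_pi.2 fun _ => by simpa using ((hasDerivAt_id t).smul_const b).const_add a
  simpa [linearDeriv_apply, comp_def] using (m.hasFDerivAt _).comp_hasDerivAt t hline

theorem norm_map_add_sub_map_sub_sum_update_le
    (m : ContinuousMultilinearMap ℝ (fun _ : Fin n => E) F) {a b : E} {r : ℝ}
    (ha : ‖a‖ ≤ r) (hab : ‖a + b‖ ≤ r) :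
    ‖m (fun _ => a + b) - m (fun _ => a) - ∑ i, m (update (fun _ => a) i b)‖ ≤
      1 / 2 * (n * (n - 1) * ‖m‖ * r ^ (n - 2)) * ‖b‖ ^ 2 := by
  cases n with
  | zero => simp [Subsingleton.elim (fun _ : Fin 0 => a + b) fun _ => a]
  | succ q =>
    have hsegment : ∀ t ∈ Icc (0 : ℝ) 1, ‖a + t • b‖ ≤ r := fun t ht => by
      simpa using (convex_closedBall (0 : E) r).add_smul_mem (by simpa using ha)
        (by simpa using hab) ht
    have hlip : ∀ t ∈ Ico (0 : ℝ) 1,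
        ‖∑ i, m (update (fun _ => a + t • b) i b) - ∑ i, m (update (fun _ => a + (0 : ℝ) • b) i b)‖
          ≤ ((q + 1) * q * ‖m‖ * r ^ (q - 1) * ‖b‖ ^ 2) * t := fun t ht => by
      have hr : ‖a + t • b‖ ⊔ ‖a + (0 : ℝ) • b‖ ≤ r :=
        max_le (hsegment t (Ico_subset_Icc_self ht)) (by simpa using ha)
      calc _ ≤ ∑ i : Fin (q + 1), ‖m‖ * ‖b‖ * q * r ^ (q - 1) * (t * ‖b‖) := by
            rw [← Finset.sum_sub_distrib]
            refine (norm_sum_le _ _).trans (Finset.sum_le_sum fun i _ => ?_)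
            refine (m.norm_map_update_const_sub_le i b _ _).trans ?_
            have : ‖a + t • b - (a + (0 : ℝ) • b)‖ = t * ‖b‖ := by
              simp [norm_smul, abs_of_nonneg ht.1]
            rw [this]
            gcongr
            exact mul_nonneg ht.1 (norm_nonneg b)
        _ = _ := by
          rw [Finset.sum_const, Finset.card_univ, Fintype.card_fin, nsmul_eq_mul]
          push_cast
          ring
    have := norm_sub_sub_deriv_le_of_norm_deriv_sub_le
      (fun t _ => m.hasDerivAt_map_const_add_smul a b t) hlip
    convert this using 2
    · simp
    · push_cast
      ring

end ContinuousMultilinearMap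

namespace FormalMultilinearSeries

variable {𝕜 E F : Type*} [NontriviallyNormedField 𝕜] [NormedAddCommGroup E] [NormedSpace 𝕜 E]
  [NormedAddCommGroup F] [NormedSpace 𝕜 F]

theorem summable_pow_mul_norm_mul_pow (p : FormalMultilinearSeries 𝕜 E F) (k : ℕ) {r : NNReal}
    (h : ↑r < p.radius) : Summable fun n : ℕ => (n : ℝ) ^ k * (‖p n‖ * r ^ n) := by
  obtain ⟨a, ha, C, -, hC⟩ := p.norm_mul_pow_le_mul_pow_of_lt_radius h
  have hgeom : Summable fun n : ℕ => C * ((n : ℝ) ^ k * a ^ n) :=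
    (summable_pow_mul_geometric_of_norm_lt_one k
      (by rw [Real.norm_of_nonneg ha.1.le]; exact ha.2)).mul_left C
  refine .of_nonneg_of_le (fun n => by positivity) (fun n => ?_) hgeom
  calc (n : ℝ) ^ k * (‖p n‖ * r ^ n) ≤ (n : ℝ) ^ k * (C * a ^ n) :=
        mul_le_mul_of_nonneg_left (hC n) (by positivity)
    _ = C * ((n : ℝ) ^ k * a ^ n) := by ring

theorem summable_mul_sub_one_mul_norm_mul_pow_sub_two (p : FormalMultilinearSeries 𝕜 E F)
    {r : ℝ} (hr : 0 < r) (h : ENNReal.ofReal r < p.radius) :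
    Summable fun n : ℕ => (n : ℝ) * (n - 1) * ‖p n‖ * r ^ (n - 2) := by
  have hsq := (p.summable_pow_mul_norm_mul_pow 2 (r := r.toNNReal) h).mul_left (r ^ 2)⁻¹
  rw [Real.coe_toNNReal r hr.le] at hsq
  refine .of_nonneg_of_le (fun n => ?_) (fun n => ?_) hsq
  · rcases n with _ | n
    · simp
    · simp only [Nat.cast_add_one, add_sub_cancel_right]
      positivity
  · rcases n with _ | _ | n
    · simp
    · simpa using mul_nonneg (inv_nonneg.2 (sq_nonneg r)) (mul_nonneg (norm_nonneg (p 1)) hr.le)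
    · calc ((n + 2 : ℕ) : ℝ) * ((n + 2 : ℕ) - 1) * ‖p (n + 2)‖ * r ^ (n + 2 - 2)
          = (r ^ 2)⁻¹ * (((n : ℝ) + 2) * (n + 1) * (‖p (n + 2)‖ * r ^ (n + 2))) := by
            push_cast
            field_simp
            ring
        _ ≤ (r ^ 2)⁻¹ * (((n + 2 : ℕ) : ℝ) ^ 2 * (‖p (n + 2)‖ * r ^ (n + 2))) := by
            gcongr
            push_cast
            nlinarith

end FormalMultilinearSeries

theorem formal_series_taylor_second_order_general
    {X Y : Type*} [NormedAddCommGroup X] [NormedSpace ℝ X]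
    [NormedAddCommGroup Y] [NormedSpace ℝ Y] [CompleteSpace Y]
    (f : FormalMultilinearSeries ℝ X Y)
    (hsym : ∀ (p : ℕ) (σ : Equiv.Perm (Fin p)) (φ : Fin p → X),
      f p (fun i => φ (σ i)) = f p φ)
    (r : ℝ) (hr : 0 < r) (hrρ : (ENNReal.ofReal r) < f.radius)
    (φ ψ : X) (h : ℝ) (hφ : ‖φ‖ ≤ r) (hφψ : ‖φ + h • ψ‖ ≤ r) :
    ‖f.sum (φ + h • ψ) - f.sum φ -
        h • ∑' p : ℕ, (p : ℝ) • f p (fun i => if (i : ℕ) = 0 then ψ else φ)‖ ≤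
      (1 / 2) * (∑' p : ℕ, (p : ℝ) * ((p : ℝ) - 1) * ‖f p‖ * r ^ (p - 2)) * h ^ 2 * ‖ψ‖ ^ 2 := by
  have hmem : ∀ x : X, ‖x‖ ≤ r → x ∈ Metric.eball (0 : X) f.radius := fun x hx =>
    mem_eball_zero_iff.2 <| by rw [← ofReal_norm]; exact (ENNReal.ofReal_le_ofReal hx).trans_lt hrρ
  have hT₁ := f.hasSum (hmem _ hφψ)
  have hT₂ := f.hasSum (hmem _ hφ)
  set S : ℕ → Y := fun p => ∑ i, f p (update (fun _ => φ) i (h • ψ))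
  set R : ℕ → Y := fun p => (f p fun _ => φ + h • ψ) - (f p fun _ => φ) - S p with hR_def
  set A : ℕ → ℝ := fun p => (p : ℝ) * ((p : ℝ) - 1) * ‖f p‖ * r ^ (p - 2)
  have hR : ∀ p, ‖R p‖ ≤ 1 / 2 * A p * ‖h • ψ‖ ^ 2 := fun p =>
    (f p).norm_map_add_sub_map_sub_sum_update_le hφ hφψ
  have hA : HasSum (fun p => 1 / 2 * A p * ‖h • ψ‖ ^ 2) (1 / 2 * (∑' p, A p) * ‖h • ψ‖ ^ 2) :=
    ((f.summable_mul_sub_one_mul_norm_mul_pow_sub_two hr hrρ).hasSum.mul_left _).mul_right _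
  -- the derivative series converges because the other three series do
  have hS_summable : Summable S :=
    ((hT₁.summable.sub hT₂.summable).sub (.of_norm_bounded hA.summable hR)).congr
      fun p => by simp only [hR_def]; abel
  have hS : HasSum S (h • ∑' p : ℕ, (p : ℝ) • f p (fun i => if (i : ℕ) = 0 then ψ else φ)) := by
    simp only [S, (f _).sum_map_update_const_smul_of_symm (hsym _)] at hS_summable ⊢
    simpa [tsum_const_smul''] using hS_summable.hasSum
  rw [← ((hT₁.sub hT₂).sub hS).tsum_eq]
  calc ‖∑' p, R p‖ ≤ 1 / 2 * (∑' p, A p) * ‖h • ψ‖ ^ 2 := tsum_of_norm_bounded hA hR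
    _ = _ := by rw [norm_smul, mul_pow, Real.norm_eq_abs, sq_abs]; ring

/-- Second order Taylor estimate for the sum of a formal series with positive
radius of convergence: for `0 < r < ρ_⊗(f)`, `‖φ‖ ≤ r`, `‖φ + h•ψ‖ ≤ r`,
`‖f(φ+hψ) − f(φ) − h·δf_φ(ψ)‖ ≤ (1/2)·[[f]]''(r)·h²·‖ψ‖²`, where
`δf_φ(ψ) = Σ_p p·f^(p)(ψ, φ, …, φ)` and `[[f]]''(r) = Σ_p p(p−1)‖f^(p)‖ r^{p−2}`. -/
theorem formal_series_taylor_second_order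
    {X Y : Type*} [NormedAddCommGroup X] [NormedSpace ℝ X] [CompleteSpace X]
    [NormedAddCommGroup Y] [NormedSpace ℝ Y] [CompleteSpace Y]
    (f : FormalMultilinearSeries ℝ X Y)
    (hsym : ∀ (p : ℕ) (σ : Equiv.Perm (Fin p)) (φ : Fin p → X),
      f p (fun i => φ (σ i)) = f p φ)
    (hρ : 0 < f.radius)
    (r : ℝ) (hr : 0 < r) (hrρ : (ENNReal.ofReal r) < f.radius)
    (φ ψ : X) (h : ℝ) (hφ : ‖φ‖ ≤ r) (hφψ : ‖φ + h • ψ‖ ≤ r) :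
    ‖f.sum (φ + h • ψ) - f.sum φ -
        h • ∑' p : ℕ, (p : ℝ) • f p (fun i => if (i : ℕ) = 0 then ψ else φ)‖ ≤
      (1 / 2) * (∑' p : ℕ, (p : ℝ) * ((p : ℝ) - 1) * ‖f p‖ * r ^ (p - 2)) * h ^ 2 * ‖ψ‖ ^ 2 :=
  formal_series_taylor_second_order_general f hsym r hr hrρ φ ψ h hφ hφψ
end

section
/- Let X be a Banach space, r > 0, V = Σ_q V^(q) an analytic vector field on X with [[V]](r) := Σ_q ‖V^(q)‖_⊗ r^q < ∞, and f = Σ_p f^(p) a formal series with [[f]]^(1)(r) := Σ_p p‖f^(p)‖_⊗ r^{p−1} < ∞. Define the derivation (V·f)(φ) := δf_φ(V(φ)). Then V·f is a formal series whose homogeneous components satisfy ‖(V·f)^(m)‖_⊗ ≤ Σ_{p=1}^{m+1} p·‖V^{(m−p+1)}‖_⊗·‖f^(p)‖_⊗ (sum over p with m−p+1 ≥ 0), and consequently [[V·f]](r) ≤ [[V]](r)·[[f]]^(1)(r). -/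
/-!
Polarization: a symmetric multilinear map `A` is recovered from its diagonal by
`m! • A φ = ∑_T (-1)^|T| A(∑_{i ∉ T} φ i, …)`, and the same alternating sum applied to any
multilinear `B` with the same diagonal gives `∑_σ B (φ ∘ σ)`; hence `‖A‖ ≤ ‖B‖`. On the
diagonal, `(V·f)^(m)` agrees with `∑_{k ≤ m} (k+1) f^(k+1)(V^(m-k)(x,…,x), x,…,x)`, and each
summand extends to a (non-symmetric) multilinear map of norm at most `‖f^(k+1)‖ ‖V^(m-k)‖` by
feeding the first `m-k` arguments to `V^(m-k)`. This gives the componentwise bound, and its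
right-hand side times `r^m` is the Cauchy product of `‖V^(q)‖ r^q` and `p ‖f^(p)‖ r^(p-1)`.
-/

open Finset

namespace MultilinearMap

variable {R M N : Type*} [CommSemiring R] [AddCommMonoid M] [AddCommGroup N] [Module R M]
  [Module R N] {m : ℕ}

theorem sum_perm_apply_eq_sum_neg_one_pow_smul (A : MultilinearMap R (fun _ : Fin m => M) N)
    (φ : Fin m → M) :
    ∑ σ : Equiv.Perm (Fin m), A (fun i => φ (σ i)) =
      ∑ T : Finset (Fin m), (-1 : ℤ) ^ #T • A (fun _ => ∑ i ∈ Tᶜ, φ i) := by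
  classical
  -- Expand each diagonal value over `r : Fin m → Fin m`; the signs attached to `r` cancel by
  -- inclusion-exclusion unless `r` is onto.
  have hexpand : ∑ T : Finset (Fin m), (-1 : ℤ) ^ #T • A (fun _ => ∑ i ∈ Tᶜ, φ i) =
      ∑ r : Fin m → Fin m,
        ∑ T ∈ (univ.image r)ᶜ.powerset, (-1 : ℤ) ^ #T • A (fun i => φ (r i)) := by
    simp_rw [A.map_sum_finset, smul_sum]
    refine sum_comm' fun T r => ?_
    simp only [mem_univ, Fintype.mem_piFinset, mem_compl, true_and, mem_powerset, subset_iff,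
      mem_image, not_exists, and_true]
    exact ⟨fun h x hx y hy => h y (hy ▸ hx), fun h a ha => h ha a rfl⟩
  rw [hexpand]
  simp_rw [← sum_smul, sum_powerset_neg_one_pow_card, compl_eq_empty_iff, ite_smul, one_smul,
    zero_smul, sum_ite, sum_const_zero, add_zero]
  refine sum_bij (fun σ _ => ⇑σ) (fun σ _ => ?_) (fun σ _ τ _ h => DFunLike.coe_injective h)
    (fun r hr => ?_) fun _ _ => rfl
  · simp [image_univ_of_surjective σ.surjective]
  · have hsurj : Function.Surjective r := fun y => by
      have hy : y ∈ univ.image r := by rw [(mem_filter.mp hr).2]; exact mem_univ y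
      simpa using hy
    exact ⟨Equiv.ofBijective r (Finite.surjective_iff_bijective.mp hsurj), mem_univ _, rfl⟩

theorem sum_perm_apply_eq_of_apply_const_eq {A B : MultilinearMap R (fun _ : Fin m => M) N}
    (h : ∀ x, A (fun _ => x) = B (fun _ => x)) (φ : Fin m → M) :
    ∑ σ : Equiv.Perm (Fin m), A (fun i => φ (σ i)) =
      ∑ σ : Equiv.Perm (Fin m), B (fun i => φ (σ i)) := by
  simp only [sum_perm_apply_eq_sum_neg_one_pow_smul, h]

end MultilinearMap

namespace ContinuousMultilinearMap

section CompFirst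

variable {𝕜 E G : Type*} [NontriviallyNormedField 𝕜] [NormedAddCommGroup E] [NormedSpace 𝕜 E]
  [NormedAddCommGroup G] [NormedSpace 𝕜 G] {k l n : ℕ}

/-- `F.compFirst P h χ = F (P (χ 0, …, χ (l-1)), χ l, …, χ (n-1))`. -/
noncomputable def compFirst (F : ContinuousMultilinearMap 𝕜 (fun _ : Fin (k + 1) => E) G)
    (P : ContinuousMultilinearMap 𝕜 (fun _ : Fin l => E) E) (h : l + k = n) :
    ContinuousMultilinearMap 𝕜 (fun _ : Fin n => E) G :=
  (curryFinFinset 𝕜 E G (s := univ.map (Fin.castLEEmb (n := l) (by omega))) (by simp)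
    (by simp [card_compl]; omega)).symm (F.curryLeft.compContinuousMultilinearMap P)

theorem compFirst_apply_const (F : ContinuousMultilinearMap 𝕜 (fun _ : Fin (k + 1) => E) G)
    (P : ContinuousMultilinearMap 𝕜 (fun _ : Fin l => E) E) (h : l + k = n) (x : E) :
    F.compFirst P h (fun _ => x) = F (Fin.cons (P fun _ => x) fun _ => x) :=
  rfl

theorem norm_compFirst_le (F : ContinuousMultilinearMap 𝕜 (fun _ : Fin (k + 1) => E) G)
    (P : ContinuousMultilinearMap 𝕜 (fun _ : Fin l => E) E) (h : l + k = n) :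
    ‖F.compFirst P h‖ ≤ ‖F‖ * ‖P‖ := by
  rw [compFirst, LinearIsometryEquiv.norm_map, ← F.curryLeft_norm]
  exact F.curryLeft.norm_compContinuousMultilinearMap_le P

end CompFirst

variable {𝕜 E F : Type*} [RCLike 𝕜] [NormedAddCommGroup E] [NormedSpace 𝕜 E]
  [NormedAddCommGroup F] [NormedSpace 𝕜 F] {m : ℕ}

theorem norm_le_of_symmetric_of_apply_const_eq
    {A B : ContinuousMultilinearMap 𝕜 (fun _ : Fin m => E) F}
    (hA : ∀ (σ : Equiv.Perm (Fin m)) (φ : Fin m → E), A (fun i => φ (σ i)) = A φ)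
    (h : ∀ x, A (fun _ => x) = B (fun _ => x)) : ‖A‖ ≤ ‖B‖ := by
  refine A.opNorm_le_bound (norm_nonneg B) fun φ => ?_
  have hsum := MultilinearMap.sum_perm_apply_eq_of_apply_const_eq
    (A := A.toMultilinearMap) (B := B.toMultilinearMap) h φ
  simp only [coe_coe, hA, sum_const, card_univ] at hsum
  have hpos : (0 : ℝ) < Fintype.card (Equiv.Perm (Fin m)) := by positivity
  refine le_of_mul_le_mul_left ?_ hpos
  calc (Fintype.card (Equiv.Perm (Fin m)) : ℝ) * ‖A φ‖
      = ‖∑ σ : Equiv.Perm (Fin m), B (fun i => φ (σ i))‖ := by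
        rw [← hsum, RCLike.norm_nsmul 𝕜, nsmul_eq_mul]
    _ ≤ ∑ σ : Equiv.Perm (Fin m), ‖B‖ * ∏ i, ‖φ (σ i)‖ :=
        norm_sum_le_of_le _ fun σ _ => B.le_opNorm _
    _ = Fintype.card (Equiv.Perm (Fin m)) * (‖B‖ * ∏ i, ‖φ i‖) := by
        simp only [fun σ : Equiv.Perm (Fin m) => Equiv.prod_comp σ (fun i => ‖φ i‖), sum_const,
          card_univ, nsmul_eq_mul]

end ContinuousMultilinearMap

theorem Fin.cons_const_eq_ite {α : Type*} {n : ℕ} (a x : α) :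
    (Fin.cons a fun _ => x : Fin (n + 1) → α) = fun i => if i = 0 then a else x := by
  funext i
  cases i using Fin.cases <;> simp

theorem Finset.sum_range_add_two_eq_sum_fin {M : Type*} [AddCommMonoid M] (m : ℕ) (g : ℕ → M) :
    ∑ p ∈ range (m + 2), g p = g 0 + ∑ k : Fin (m + 1), g (k + 1) := by
  rw [sum_range_succ', Fin.sum_univ_eq_sum_range (fun k => g (k + 1)), add_comm]

theorem FormalMultilinearSeries.norm_le_of_apply_const_eq_sum_comp {𝕜 E F : Type*} [RCLike 𝕜]
    [NormedAddCommGroup E] [NormedSpace 𝕜 E] [NormedAddCommGroup F] [NormedSpace 𝕜 F]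
    {V : FormalMultilinearSeries 𝕜 E E} {f W : FormalMultilinearSeries 𝕜 E F} {m : ℕ}
    (hWsym : ∀ (σ : Equiv.Perm (Fin m)) (φ : Fin m → E), W m (fun i => φ (σ i)) = W m φ)
    (hWdiag : ∀ x : E, W m (fun _ => x) = ∑ p ∈ range (m + 2),
      (p : 𝕜) • f p (fun i => if (i : ℕ) = 0 then V (m + 1 - p) (fun _ => x) else x)) :
    ‖W m‖ ≤ ∑ p ∈ range (m + 2), (p : ℝ) * ‖V (m + 1 - p)‖ * ‖f p‖ := by
  let B : ContinuousMultilinearMap 𝕜 (fun _ : Fin m => E) F := ∑ k : Fin (m + 1),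
    ((k : 𝕜) + 1) • (f (k + 1)).compFirst (V (m + 1 - (k + 1))) (by omega)
  have hdiag : ∀ x, W m (fun _ => x) = B (fun _ => x) := by
    intro x
    simp [hWdiag, B, sum_range_add_two_eq_sum_fin,
      ContinuousMultilinearMap.compFirst_apply_const, Fin.cons_const_eq_ite]
  calc ‖W m‖ ≤ ‖B‖ := ContinuousMultilinearMap.norm_le_of_symmetric_of_apply_const_eq hWsym hdiag
    _ ≤ ∑ k : Fin (m + 1), ((k : ℝ) + 1) * (‖f (k + 1)‖ * ‖V (m + 1 - (k + 1))‖) := by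
      refine norm_sum_le_of_le _ fun k _ => ?_
      rw [norm_smul]
      gcongr
      · norm_cast
      · exact ContinuousMultilinearMap.norm_compFirst_le _ _ _
    _ = ∑ p ∈ range (m + 2), (p : ℝ) * ‖V (m + 1 - p)‖ * ‖f p‖ := by
      simp [sum_range_add_two_eq_sum_fin, mul_comm, mul_left_comm]

theorem summable_and_tsum_le_tsum_mul_tsum_of_le_sum_antidiagonal {u a b : ℕ → ℝ}
    (hu : ∀ n, 0 ≤ u n) (ha₀ : ∀ n, 0 ≤ a n) (hb₀ : ∀ n, 0 ≤ b n) (ha : Summable a)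
    (hb : Summable b) (h : ∀ n, u n ≤ ∑ kl ∈ antidiagonal n, a kl.1 * b kl.2) :
    Summable u ∧ ∑' n, u n ≤ (∑' n, a n) * ∑' n, b n := by
  have hab : Summable fun x : ℕ × ℕ => a x.1 * b x.2 := ha.mul_of_nonneg hb ha₀ hb₀
  have hcauchy := summable_sum_mul_antidiagonal_of_summable_mul hab
  have hu_sum : Summable u := hcauchy.of_nonneg_of_le hu h
  refine ⟨hu_sum, ?_⟩
  rw [ha.tsum_mul_tsum_eq_tsum_sum_antidiagonal hb hab]
  exact hu_sum.tsum_le_tsum h hcauchy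

theorem derivation_of_formal_series_bound_general
    {X : Type*} [NormedAddCommGroup X] [NormedSpace ℝ X]
    (r : ℝ) (hr : 0 < r)
    (V : FormalMultilinearSeries ℝ X X) (f : FormalMultilinearSeries ℝ X ℝ)
    (hV : Summable fun q : ℕ => ‖V q‖ * r ^ q)
    (hf : Summable fun p : ℕ => (p : ℝ) * ‖f p‖ * r ^ (p - 1))
    (W : FormalMultilinearSeries ℝ X ℝ)
    (hWsym : ∀ (m : ℕ) (σ : Equiv.Perm (Fin m)) (φ : Fin m → X),
      W m (fun i => φ (σ i)) = W m φ)
    (hWdiag : ∀ (m : ℕ) (φ : X),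
      W m (fun _ => φ) =
        ∑ p ∈ Finset.range (m + 2),
          (p : ℝ) * f p (fun i => if (i : ℕ) = 0 then V (m + 1 - p) (fun _ => φ) else φ)) :
    (∀ m : ℕ, ‖W m‖ ≤
        ∑ p ∈ Finset.range (m + 2), (p : ℝ) * ‖V (m + 1 - p)‖ * ‖f p‖) ∧
    Summable (fun m : ℕ => ‖W m‖ * r ^ m) ∧
    (∑' m : ℕ, ‖W m‖ * r ^ m) ≤
      (∑' q : ℕ, ‖V q‖ * r ^ q) * (∑' p : ℕ, (p : ℝ) * ‖f p‖ * r ^ (p - 1)) := by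
  have hcomp : ∀ m : ℕ, ‖W m‖ ≤
      ∑ p ∈ Finset.range (m + 2), (p : ℝ) * ‖V (m + 1 - p)‖ * ‖f p‖ := fun m =>
    FormalMultilinearSeries.norm_le_of_apply_const_eq_sum_comp (hWsym m) (by simpa using hWdiag m)
  set g : ℕ → ℝ := fun p => (p : ℝ) * ‖f p‖ * r ^ (p - 1) with hg
  have hcauchy : ∀ n, ‖W n‖ * r ^ n ≤
      ∑ kl ∈ antidiagonal n, g (kl.1 + 1) * (‖V kl.2‖ * r ^ kl.2) := by
    intro n
    refine (mul_le_mul_of_nonneg_right (hcomp n) (by positivity)).trans_eq ?_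
    rw [Nat.sum_antidiagonal_eq_sum_range_succ (fun k q => g (k + 1) * (‖V q‖ * r ^ q)),
      sum_range_succ']
    simp only [CharP.cast_eq_zero, zero_mul, add_zero, sum_mul]
    refine sum_congr rfl fun k hk => ?_
    obtain ⟨j, rfl⟩ := Nat.exists_eq_add_of_le (mem_range_succ_iff.mp hk)
    rw [Nat.add_sub_add_right, Nat.add_sub_cancel_left]
    simp only [hg, Nat.add_sub_cancel, pow_add]
    push_cast
    ring
  obtain ⟨hsum, hle⟩ := summable_and_tsum_le_tsum_mul_tsum_of_le_sum_antidiagonal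
    (fun n => by positivity) (fun k => by positivity) (fun q => by positivity)
    ((summable_nat_add_iff 1).mpr hf) hV hcauchy
  refine ⟨hcomp, hsum, hle.trans_eq ?_⟩
  rw [mul_comm, hf.tsum_eq_zero_add]
  simp [hg]

/-- **Bound for the derivation `V·f` of a formal series by an analytic vector
field.** Let `V = Σ_q V^(q)` be an analytic vector field and `f = Σ_p f^(p)` a
formal series on a Banach space `X`, with `[[V]](r) < ∞` and `[[f]]^(1)(r) < ∞`.
If `W` is the formal series representing the derivation `(V·f)(φ) = δf_φ(V(φ))`
(i.e. `W` has symmetric components and on the diagonal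
`W^(m)(φ,…,φ) = Σ_{p+q=m+1} p·f^(p)(V^(q)(φ,…,φ), φ,…,φ)`), then its components
satisfy `‖W^(m)‖ ≤ Σ_{p=1}^{m+1} p‖V^{(m+1-p)}‖‖f^(p)‖` and consequently
`[[W]](r) ≤ [[V]](r)·[[f]]^(1)(r)`. -/
theorem derivation_of_formal_series_bound
    {X : Type*} [NormedAddCommGroup X] [NormedSpace ℝ X] [CompleteSpace X]
    (r : ℝ) (hr : 0 < r)
    (V : FormalMultilinearSeries ℝ X X) (f : FormalMultilinearSeries ℝ X ℝ)
    (hVsym : ∀ (q : ℕ) (σ : Equiv.Perm (Fin q)) (φ : Fin q → X),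
      V q (fun i => φ (σ i)) = V q φ)
    (hfsym : ∀ (p : ℕ) (σ : Equiv.Perm (Fin p)) (φ : Fin p → X),
      f p (fun i => φ (σ i)) = f p φ)
    (hV : Summable fun q : ℕ => ‖V q‖ * r ^ q)
    (hf : Summable fun p : ℕ => (p : ℝ) * ‖f p‖ * r ^ (p - 1))
    (W : FormalMultilinearSeries ℝ X ℝ)
    (hWsym : ∀ (m : ℕ) (σ : Equiv.Perm (Fin m)) (φ : Fin m → X),
      W m (fun i => φ (σ i)) = W m φ)
    (hWdiag : ∀ (m : ℕ) (φ : X),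
      W m (fun _ => φ) =
        ∑ p ∈ Finset.range (m + 2),
          (p : ℝ) * f p (fun i => if (i : ℕ) = 0 then V (m + 1 - p) (fun _ => φ) else φ)) :
    (∀ m : ℕ, ‖W m‖ ≤
        ∑ p ∈ Finset.range (m + 2), (p : ℝ) * ‖V (m + 1 - p)‖ * ‖f p‖) ∧
    Summable (fun m : ℕ => ‖W m‖ * r ^ m) ∧
    (∑' m : ℕ, ‖W m‖ * r ^ m) ≤
      (∑' q : ℕ, ‖V q‖ * r ^ q) * (∑' p : ℕ, (p : ℝ) * ‖f p‖ * r ^ (p - 1)) :=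
  derivation_of_formal_series_bound_general r hr V f hV hf W hWsym hWdiag
end
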